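/- Let u, v, θ be inner functions with gcd(u,v) = 1 (their greatest common inner divisor is constant) and suppose v divides θ. If the truncated Toeplitz operator A_{conj(u)v} on K_θ is the zero operator, then either θ = c·v for a unimodular constant c, or v is a unimodular constant. -/

import Mathlib

noncomputable section
open MeasureTheory Complex Real Filter

instance : Fact ((0:ℝ) < 2 * π) := ⟨by positivity⟩

/-- Normalized Lebesgue (Haar) measure on the circle `ℝ / 2πℤ`. -/
abbrev μT : Measure (AddCircle (2 * π)) := AddCircle.haarAddCircle

/-- `L²(𝕋)`. -/
abbrev L2T := Lp ℂ 2 μT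

/-- The Hardy space `H²`, the closed span of the nonnegative Fourier modes in `L²(𝕋)`. -/
def hardy : Submodule ℂ L2T :=
  (Submodule.span ℂ (Set.range fun n : ℕ => fourierLp 2 (n : ℤ))).topologicalClosure

instance : CompleteSpace hardy :=
  (Submodule.isClosed_topologicalClosure _).completeSpace_coe

instance (K : Submodule ℂ L2T) : CompleteSpace Kᗮ :=
  K.isClosed_orthogonal.completeSpace_coe

/-- An inner function: (essentially) bounded measurable, unimodular a.e., with vanishing
negative Fourier coefficients (i.e. belonging to `H^∞`). -/
structure IsInner (u : AddCircle (2 * π) → ℂ) : Prop where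
  meas : AEStronglyMeasurable u μT
  unimod : ∀ᵐ t ∂μT, ‖u t‖ = 1
  analytic : ∀ n : ℤ, n < 0 → fourierCoeff u n = 0

/-- `θ · H²`, the image of the Hardy space under multiplication by `θ`. -/
def mulHardy (θ : AddCircle (2 * π) → ℂ) : Submodule ℂ L2T where
  carrier := {g : L2T | ∃ h : L2T, h ∈ hardy ∧ ⇑g =ᵐ[μT] fun t => θ t * h t}
  zero_mem' := by
    refine ⟨0, hardy.zero_mem, ?_⟩
    filter_upwards [Lp.coeFn_zero ℂ 2 μT] with t ht
    simp [ht]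
  add_mem' := by
    rintro g₁ g₂ ⟨h₁, hh₁, e₁⟩ ⟨h₂, hh₂, e₂⟩
    refine ⟨h₁ + h₂, hardy.add_mem hh₁ hh₂, ?_⟩
    filter_upwards [Lp.coeFn_add g₁ g₂, Lp.coeFn_add h₁ h₂, e₁, e₂] with t a b c d
    simp only [a, b, Pi.add_apply, c, d]
    ring
  smul_mem' := by
    rintro c g ⟨h, hh, e⟩
    refine ⟨c • h, hardy.smul_mem c hh, ?_⟩
    filter_upwards [Lp.coeFn_smul c g, Lp.coeFn_smul c h, e] with t a b hc
    simp only [a, b, Pi.smul_apply, hc, smul_eq_mul]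
    ring

/-- The model space `K_θ = H² ⊖ θH²`. -/
def modelSpace (θ : AddCircle (2 * π) → ℂ) : Submodule ℂ L2T :=
  hardy ⊓ (mulHardy θ)ᗮ

instance (θ : AddCircle (2 * π) → ℂ) : CompleteSpace (modelSpace θ) := by
  refine IsClosed.completeSpace_coe (hs := ?_)
  have h : (modelSpace θ : Set L2T) = (hardy : Set L2T) ∩ ((mulHardy θ)ᗮ : Set L2T) := rfl
  rw [h]
  exact (Submodule.isClosed_topologicalClosure _).inter ((mulHardy θ).isClosed_orthogonal)

/-- The orthogonal projection of `L²(𝕋)` onto `H²`. -/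
def Ph : L2T →L[ℂ] hardy := hardy.orthogonalProjectionOnto

/-- The orthogonal projection of `L²(𝕋)` onto the model space `K_θ`. -/
def Pmod (θ : AddCircle (2 * π) → ℂ) : L2T →L[ℂ] modelSpace θ :=
  (modelSpace θ).orthogonalProjectionOnto

/-- The orthogonal projection of `L²(𝕋)` onto `K_θᗮ`. -/
def Qmod (θ : AddCircle (2 * π) → ℂ) : L2T →L[ℂ] (modelSpace θ)ᗮ :=
  (modelSpace θ)ᗮ.orthogonalProjectionOnto

/-- `A` is the truncated Toeplitz operator with symbol `φ` on `K_θ`. -/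
def IsTTO (θ φ : AddCircle (2 * π) → ℂ) (A : modelSpace θ →L[ℂ] modelSpace θ) : Prop :=
  ∀ (f : modelSpace θ) (g : L2T),
    (⇑g =ᵐ[μT] fun t => φ t * (f : L2T) t) → A f = Pmod θ g

/-- `B` is the truncated Hankel operator with symbol `φ` : `K_θ → K_θᗮ`. -/
def IsTHO (θ φ : AddCircle (2 * π) → ℂ) (B : modelSpace θ →L[ℂ] (modelSpace θ)ᗮ) : Prop :=
  ∀ (f : modelSpace θ) (g : L2T),
    (⇑g =ᵐ[μT] fun t => φ t * (f : L2T) t) → B f = Qmod θ g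

/-- `D` is the dual truncated Toeplitz operator with symbol `φ` on `K_θᗮ`. -/
def IsDTTO (θ φ : AddCircle (2 * π) → ℂ) (D : (modelSpace θ)ᗮ →L[ℂ] (modelSpace θ)ᗮ) : Prop :=
  ∀ (f : (modelSpace θ)ᗮ) (g : L2T),
    (⇑g =ᵐ[μT] fun t => φ t * (f : L2T) t) → D f = Qmod θ g

/-- `w` divides `u` in the sense of inner functions: `u = w·u₁` for some inner `u₁`. -/
def InnerDivides (w u : AddCircle (2 * π) → ℂ) : Prop :=
  ∃ u₁ : AddCircle (2 * π) → ℂ, IsInner u₁ ∧ u =ᵐ[μT] fun t => w t * u₁ t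

/-- `gcd(u,v) = 1`: every common inner divisor of `u` and `v` is a (unimodular)
constant. -/
def InnerCoprime (u v : AddCircle (2 * π) → ℂ) : Prop :=
  ∀ w : AddCircle (2 * π) → ℂ, IsInner w → InnerDivides w u → InnerDivides w v →
    ∃ c : ℂ, ‖c‖ = 1 ∧ ∀ᵐ t ∂μT, w t = c

section Helpers

open scoped InnerProductSpace ComplexConjugate

local notation "𝕋" => AddCircle (2 * π)

lemma norm_fourier' (n : ℤ) (t : 𝕋) : ‖fourier n t‖ = 1 := by
  rw [fourier_apply]; exact Circle.norm_coe _

lemma memLp_of_bdd {f : 𝕋 → ℂ} (hm : AEStronglyMeasurable f μT) (C : ℝ)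
    (hb : ∀ᵐ t ∂μT, ‖f t‖ ≤ C) : MemLp f 2 μT := by
  refine (memLp_const (μ := μT) (p := 2) ((|C| : ℝ) : ℂ)).of_le hm ?_
  filter_upwards [hb] with t ht
  simp only [Complex.norm_real, Real.norm_eq_abs]
  exact ht.trans ((le_abs_self C).trans (_root_.abs_abs C).ge)

lemma integrable_of_memLp {f : 𝕋 → ℂ} (hf : MemLp f 2 μT) : Integrable f μT :=
  hf.integrable (by norm_num)

lemma integrable_fourier_mul {f : 𝕋 → ℂ} (hf : Integrable f μT) (m : ℤ) :
    Integrable (fun t => fourier m t * f t) μT :=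
  hf.bdd_mul (c := 1) ((fourier m).continuous.aestronglyMeasurable)
    (Filter.Eventually.of_forall fun t => le_of_eq (norm_fourier' m t))

lemma fc_congr {f g : 𝕋 → ℂ} (h : f =ᵐ[μT] g) (n : ℤ) :
    fourierCoeff f n = fourierCoeff g n := by
  unfold fourierCoeff
  exact integral_congr_ae (h.mono fun t ht => by dsimp only; rw [ht])

lemma fc_add {f g : 𝕋 → ℂ} (hf : Integrable f μT) (hg : Integrable g μT) (n : ℤ) :
    fourierCoeff (fun t => f t + g t) n = fourierCoeff f n + fourierCoeff g n := by
  unfold fourierCoeff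
  simp only [smul_eq_mul, mul_add]
  exact integral_add (integrable_fourier_mul hf _) (integrable_fourier_mul hg _)

lemma fc_const_mul (f : 𝕋 → ℂ) (c : ℂ) (n : ℤ) :
    fourierCoeff (fun t => c * f t) n = c * fourierCoeff f n := by
  unfold fourierCoeff
  simp only [smul_eq_mul]
  rw [← integral_const_mul]
  exact integral_congr_ae (Filter.Eventually.of_forall fun t => by ring)

lemma fc_sub {f g : 𝕋 → ℂ} (hf : Integrable f μT) (hg : Integrable g μT) (n : ℤ) :
    fourierCoeff (fun t => f t - g t) n = fourierCoeff f n - fourierCoeff g n := by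
  unfold fourierCoeff
  simp only [smul_eq_mul, mul_sub]
  exact integral_sub (integrable_fourier_mul hf _) (integrable_fourier_mul hg _)

lemma fc_conj (f : 𝕋 → ℂ) (n : ℤ) :
    fourierCoeff (fun t => conj (f t)) n = conj (fourierCoeff f (-n)) := by
  unfold fourierCoeff
  rw [← integral_conj]
  apply integral_congr_ae
  apply Filter.EventuallyEq.of_eq
  funext t
  simp only [smul_eq_mul, map_mul, neg_neg, ← fourier_neg]

lemma fc_shift (f : 𝕋 → ℂ) (k n : ℤ) :
    fourierCoeff (fun t => fourier k t * f t) n = fourierCoeff f (n - k) := by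
  unfold fourierCoeff
  apply integral_congr_ae
  apply Filter.EventuallyEq.of_eq
  funext t
  simp only [smul_eq_mul, ← mul_assoc, ← fourier_add]
  congr 2
  ring

lemma fc_zbar_mul (f : 𝕋 → ℂ) (n : ℤ) :
    fourierCoeff (fun t => conj (fourier 1 t) * f t) n = fourierCoeff f (n + 1) := by
  have : (fun t => conj (fourier 1 t) * f t) = fun t => fourier (-1) t * f t := by
    funext t; rw [fourier_neg]
  rw [this, fc_shift, show n - -1 = n + 1 by ring]

lemma fc_fourierLp (k n : ℤ) :
    fourierCoeff (⇑(fourierLp 2 k : L2T)) n = if n = k then 1 else 0 := by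
  rw [← fourierBasis_repr, ← coe_fourierBasis, fourierBasis.repr_self]
  by_cases h : n = k
  · subst h; simp [lp.single_apply_self]
  · simp [lp.single_apply_ne 2 k _ h, h]

lemma fc_fourier (k n : ℤ) :
    fourierCoeff (fun t : 𝕋 => fourier k t) n = if n = k then 1 else 0 := by
  rw [← fc_fourierLp k n]
  exact fc_congr (coeFn_fourierLp 2 k).symm n

lemma fc_const (d : ℂ) (n : ℤ) :
    fourierCoeff (fun _ : 𝕋 => d) n = if n = 0 then d else 0 := by
  have : (fun _ : 𝕋 => d) = fun t : 𝕋 => d * fourier 0 t := by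
    funext t; rw [fourier_zero, mul_one]
  rw [this, fc_const_mul, fc_fourier]
  split <;> simp

lemma inner_toLp_eq {F G : 𝕋 → ℂ} (hF : MemLp F 2 μT) (hG : MemLp G 2 μT) :
    ⟪hF.toLp F, hG.toLp G⟫_ℂ = ∫ t, conj (F t) * G t ∂μT := by
  rw [MeasureTheory.L2.inner_def]
  apply integral_congr_ae
  filter_upwards [hF.coeFn_toLp, hG.coeFn_toLp] with t h1 h2
  rw [h1, h2, RCLike.inner_apply']

lemma fc_mul_tsum {p q : 𝕋 → ℂ} (hpm : AEStronglyMeasurable p μT)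
    (hpb : ∀ᵐ t ∂μT, ‖p t‖ ≤ 1) (hq : MemLp q 2 μT) (n : ℤ) :
    fourierCoeff (fun t => p t * q t) n
      = ∑' m : ℤ, fourierCoeff p (n - m) * fourierCoeff q m := by
  have hconjm : AEStronglyMeasurable (fun t => conj (p t)) μT :=
    Complex.continuous_conj.comp_aestronglyMeasurable hpm
  have hXm : MemLp (fun t => conj (p t) * fourier n t) 2 μT := by
    apply memLp_of_bdd (hconjm.mul (fourier n).continuous.aestronglyMeasurable) 1
    filter_upwards [hpb] with t ht
    simp only [Pi.mul_apply]
    rw [norm_mul, norm_fourier', mul_one, RCLike.norm_conj]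
    exact ht
  set X := hXm.toLp _ with hX
  set Y := hq.toLp _ with hY
  have hXY : ⟪X, Y⟫_ℂ = fourierCoeff (fun t => p t * q t) n := by
    rw [inner_toLp_eq hXm hq]
    unfold fourierCoeff
    apply integral_congr_ae
    apply Filter.EventuallyEq.of_eq
    funext t
    simp only [smul_eq_mul, map_mul, Complex.conj_conj, ← fourier_neg]
    ring
  have hterm : ∀ m : ℤ, ⟪X, fourierBasis m⟫_ℂ * ⟪fourierBasis m, Y⟫_ℂ
      = fourierCoeff p (n - m) * fourierCoeff q m := by
    intro m
    have h1 : ⟪fourierBasis m, Y⟫_ℂ = fourierCoeff q m := by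
      rw [← fourierBasis.repr_apply_apply, fourierBasis_repr]
      exact fc_congr hq.coeFn_toLp m
    have h2 : ⟪X, fourierBasis m⟫_ℂ = fourierCoeff p (n - m) := by
      rw [← inner_conj_symm, ← fourierBasis.repr_apply_apply, fourierBasis_repr]
      have e1 : fourierCoeff (⇑X) m = conj (fourierCoeff p (n - m)) := by
        rw [fc_congr hXm.coeFn_toLp m]
        have : (fun t => conj (p t) * fourier n t)
            = fun t => fourier n t * conj (p t) := by funext t; ring
        rw [fc_congr (Filter.EventuallyEq.of_eq this) m, fc_shift, fc_conj,
          show -(m - n) = n - m by ring]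
      rw [e1, Complex.conj_conj]
    rw [h1, h2]
  have hsum := fourierBasis.hasSum_inner_mul_inner X Y
  rw [← hXY, ← hsum.tsum_eq]
  exact tsum_congr hterm

lemma fc_mul_an {p q : 𝕋 → ℂ} (hpm : AEStronglyMeasurable p μT)
    (hpb : ∀ᵐ t ∂μT, ‖p t‖ ≤ 1) (hq : MemLp q 2 μT)
    (hpa : ∀ k : ℤ, k < 0 → fourierCoeff p k = 0) {A : ℤ}
    (hqa : ∀ k : ℤ, k < A → fourierCoeff q k = 0) :
    ∀ n : ℤ, n < A → fourierCoeff (fun t => p t * q t) n = 0 := by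
  intro n hn
  rw [fc_mul_tsum hpm hpb hq]
  have h0 : ∀ m : ℤ, fourierCoeff p (n - m) * fourierCoeff q m = 0 := by
    intro m
    by_cases h : m < A
    · rw [hqa m h, mul_zero]
    · rw [hpa (n - m) (by omega), zero_mul]
  calc ∑' m : ℤ, fourierCoeff p (n - m) * fourierCoeff q m
      = ∑' _ : ℤ, (0 : ℂ) := tsum_congr h0
    _ = 0 := tsum_zero

lemma fc_mul_coan {p q : 𝕋 → ℂ} (hpm : AEStronglyMeasurable p μT)
    (hpb : ∀ᵐ t ∂μT, ‖p t‖ ≤ 1) (hq : MemLp q 2 μT)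
    (hpa : ∀ k : ℤ, 0 < k → fourierCoeff p k = 0) {A : ℤ}
    (hqa : ∀ k : ℤ, A ≤ k → fourierCoeff q k = 0) :
    ∀ n : ℤ, A ≤ n → fourierCoeff (fun t => p t * q t) n = 0 := by
  intro n hn
  rw [fc_mul_tsum hpm hpb hq]
  have h0 : ∀ m : ℤ, fourierCoeff p (n - m) * fourierCoeff q m = 0 := by
    intro m
    by_cases h : A ≤ m
    · rw [hqa m h, mul_zero]
    · rw [hpa (n - m) (by omega), zero_mul]
  calc ∑' m : ℤ, fourierCoeff p (n - m) * fourierCoeff q m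
      = ∑' _ : ℤ, (0 : ℂ) := tsum_congr h0
    _ = 0 := tsum_zero

lemma fc_mul_zero {p q : 𝕋 → ℂ} (hpm : AEStronglyMeasurable p μT)
    (hpb : ∀ᵐ t ∂μT, ‖p t‖ ≤ 1) (hq : MemLp q 2 μT)
    (hpa : ∀ k : ℤ, k < 0 → fourierCoeff p k = 0)
    (hqa : ∀ k : ℤ, k < 0 → fourierCoeff q k = 0) :
    fourierCoeff (fun t => p t * q t) 0 = fourierCoeff p 0 * fourierCoeff q 0 := by
  rw [fc_mul_tsum hpm hpb hq]
  have := tsum_eq_single (L := SummationFilter.unconditional ℤ) (f := fun m : ℤ => fourierCoeff p (0 - m) * fourierCoeff q m) 0 ?_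
  · rw [this]; norm_num
  · intro m hm
    rcases lt_or_gt_of_ne hm with h | h
    · rw [hqa m h, mul_zero]
    · rw [hpa (0 - m) (by omega), zero_mul]

lemma fourierBasis_eq (k : ℤ) : (fourierBasis (T := 2 * π)) k = fourierLp 2 k := by
  rw [← coe_fourierBasis]

set_option maxHeartbeats 1000000 in
/-- Coefficient characterization of membership in `hardy`. -/
lemma mem_hardy_iff {x : L2T} :
    x ∈ hardy ↔ ∀ n : ℤ, n < 0 → fourierCoeff (⇑x) n = 0 := by
  constructor
  · intro hx n hn
    have hxk : hardy ≤ LinearMap.ker (innerSL ℂ (fourierBasis (T := 2 * π) n)).toLinearMap := by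
      apply Submodule.topologicalClosure_minimal
      · rw [Submodule.span_le]
        rintro y ⟨m, rfl⟩
        simp only [SetLike.mem_coe, LinearMap.mem_ker, ContinuousLinearMap.coe_coe, innerSL_apply_apply]
        rw [← coe_fourierBasis]
        exact fourierBasis.orthonormal.2 (by omega)
      · exact ContinuousLinearMap.isClosed_ker _
    have := hxk hx
    rw [LinearMap.mem_ker, ContinuousLinearMap.coe_coe, innerSL_apply_apply] at this
    rw [← fourierBasis_repr, fourierBasis.repr_apply_apply, this]
  · intro h
    have hs := fourierBasis.hasSum_repr x
    have hmem : ∀ s : Finset ℤ,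
        (∑ i ∈ s, fourierBasis.repr x i • fourierBasis (T := 2 * π) i) ∈
          (Submodule.span ℂ (Set.range fun n : ℕ => (fourierLp 2 (n : ℤ) : L2T))) := by
      intro s
      apply Submodule.sum_mem
      intro i _
      by_cases hi : 0 ≤ i
      · apply Submodule.smul_mem
        apply Submodule.subset_span
        refine ⟨i.toNat, ?_⟩
        have hi' : ((i.toNat : ℕ) : ℤ) = i := Int.toNat_of_nonneg hi
        simp only []
        rw [hi']
        exact (fourierBasis_eq i).symm
      · have : fourierBasis.repr x i = 0 := by
          rw [fourierBasis_repr]; exact h i (by omega)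
        rw [this, zero_smul]
        exact Submodule.zero_mem _
    have : x ∈ closure ((Submodule.span ℂ
        (Set.range fun n : ℕ => (fourierLp 2 (n : ℤ) : L2T))) : Set L2T) :=
      mem_closure_of_tendsto hs (Filter.Eventually.of_forall fun s => hmem s)
    rw [← Submodule.topologicalClosure_coe] at this
    exact this

/-- If all nonnegative coefficients vanish, the element is orthogonal to `hardy`. -/
lemma mem_hardy_orth {x : L2T} (h : ∀ n : ℤ, 0 ≤ n → fourierCoeff (⇑x) n = 0) :
    x ∈ hardyᗮ := by
  rw [Submodule.mem_orthogonal]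
  intro y hy
  have hyk : hardy ≤ LinearMap.ker (innerSL ℂ x).toLinearMap := by
    apply Submodule.topologicalClosure_minimal
    · rw [Submodule.span_le]
      rintro z ⟨m, rfl⟩
      simp only [SetLike.mem_coe, LinearMap.mem_ker, ContinuousLinearMap.coe_coe, innerSL_apply_apply]
      rw [← inner_conj_symm]
      have : ⟪(fourierLp 2 (m : ℤ) : L2T), x⟫_ℂ = fourierCoeff (⇑x) (m : ℤ) := by
        rw [← coe_fourierBasis, ← fourierBasis.repr_apply_apply, fourierBasis_repr]
      rw [this, h m (by positivity), map_zero]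
    · exact ContinuousLinearMap.isClosed_ker _
  have := hyk hy
  rw [LinearMap.mem_ker, ContinuousLinearMap.coe_coe, innerSL_apply_apply] at this
  rw [← inner_conj_symm, this, map_zero]

lemma innerL2 (f g : L2T) : ⟪f, g⟫_ℂ = ∫ t, conj (f t) * g t ∂μT := by
  rw [MeasureTheory.L2.inner_def]
  exact integral_congr_ae (Filter.Eventually.of_forall fun t => RCLike.inner_apply' _ _)

lemma inner_toLp_left {F : 𝕋 → ℂ} (hF : MemLp F 2 μT) (g : L2T) :
    ⟪hF.toLp F, g⟫_ℂ = ∫ t, conj (F t) * g t ∂μT := by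
  rw [innerL2]
  apply integral_congr_ae
  filter_upwards [hF.coeFn_toLp] with t h1
  rw [h1]

lemma inner_toLp_right (g : L2T) {F : 𝕋 → ℂ} (hF : MemLp F 2 μT) :
    ⟪g, hF.toLp F⟫_ℂ = ∫ t, conj (g t) * F t ∂μT := by
  rw [innerL2]
  apply integral_congr_ae
  filter_upwards [hF.coeFn_toLp] with t h1
  rw [h1]

lemma memLp_mul_fourier {w : 𝕋 → ℂ} (hm : AEStronglyMeasurable w μT)
    (hb : ∀ᵐ t ∂μT, ‖w t‖ ≤ 1) (n : ℤ) :
    MemLp (fun t => w t * fourier n t) 2 μT := by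
  apply memLp_of_bdd (hm.mul (fourier n).continuous.aestronglyMeasurable) 1
  filter_upwards [hb] with t ht
  simp only [Pi.mul_apply]
  rw [norm_mul, norm_fourier', mul_one]
  exact ht

lemma memLp_conj_mul_Lp {w : 𝕋 → ℂ} (hm : AEStronglyMeasurable w μT)
    (hb : ∀ᵐ t ∂μT, ‖w t‖ ≤ 1) (f : L2T) :
    MemLp (fun t => conj (w t) * f t) 2 μT := by
  refine (Lp.memLp f).of_le
    ((Complex.continuous_conj.comp_aestronglyMeasurable hm).mul (Lp.aestronglyMeasurable f)) ?_
  filter_upwards [hb] with t ht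
  rw [norm_mul, RCLike.norm_conj]
  exact mul_le_of_le_one_left (norm_nonneg _) ht

lemma fourierLp_mem_hardy (n : ℤ) (hn : 0 ≤ n) : (fourierLp 2 n : L2T) ∈ hardy := by
  apply Submodule.le_topologicalClosure
  apply Submodule.subset_span
  refine ⟨n.toNat, ?_⟩
  simp only []
  rw [Int.toNat_of_nonneg hn]

lemma mulHardy_elem {w : 𝕋 → ℂ} (hm : AEStronglyMeasurable w μT)
    (hb : ∀ᵐ t ∂μT, ‖w t‖ ≤ 1) (n : ℤ) (hn : 0 ≤ n) :
    ((memLp_mul_fourier hm hb n).toLp _) ∈ mulHardy w := by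
  refine ⟨fourierLp 2 n, fourierLp_mem_hardy n hn, ?_⟩
  filter_upwards [(memLp_mul_fourier hm hb n).coeFn_toLp, coeFn_fourierLp 2 n] with t h1 h2
  rw [h1, h2]

lemma coeff_conj_mul_of_orth {w : 𝕋 → ℂ} (hm : AEStronglyMeasurable w μT)
    (hb : ∀ᵐ t ∂μT, ‖w t‖ ≤ 1) {f : L2T} (hf : f ∈ (mulHardy w)ᗮ) :
    ∀ n : ℤ, 0 ≤ n → fourierCoeff (fun t => conj (w t) * f t) n = 0 := by
  intro n hn
  have h0 := (Submodule.mem_orthogonal _ f).mp hf _ (mulHardy_elem hm hb n hn)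
  rw [inner_toLp_left] at h0
  rw [← h0]
  unfold fourierCoeff
  apply integral_congr_ae
  apply Filter.EventuallyEq.of_eq
  funext t
  simp only [smul_eq_mul, map_mul, ← fourier_neg]
  ring

lemma mem_mulHardy_orth {w : 𝕋 → ℂ} (hm : AEStronglyMeasurable w μT)
    (hb : ∀ᵐ t ∂μT, ‖w t‖ ≤ 1) {f : L2T}
    (h : ∀ n : ℤ, 0 ≤ n → fourierCoeff (fun t => conj (w t) * f t) n = 0) :
    f ∈ (mulHardy w)ᗮ := by
  rw [Submodule.mem_orthogonal]
  rintro g ⟨h₁, hh₁, e⟩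
  have hq := memLp_conj_mul_Lp hm hb f
  have hqperp : hq.toLp _ ∈ hardyᗮ := by
    apply mem_hardy_orth
    intro n hn
    rw [fc_congr hq.coeFn_toLp]
    exact h n hn
  have h2 := (Submodule.mem_orthogonal _ _).mp hqperp h₁ hh₁
  rw [inner_toLp_right] at h2
  rw [innerL2, ← h2]
  apply integral_congr_ae
  filter_upwards [e] with t ht
  rw [ht]
  simp only [map_mul]
  ring

lemma mem_model {w : 𝕋 → ℂ} (hm : AEStronglyMeasurable w μT)
    (hb : ∀ᵐ t ∂μT, ‖w t‖ ≤ 1) {F : 𝕋 → ℂ} (hF : MemLp F 2 μT)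
    (h1 : ∀ n : ℤ, n < 0 → fourierCoeff F n = 0)
    (h2 : ∀ n : ℤ, 0 ≤ n → fourierCoeff (fun t => conj (w t) * F t) n = 0) :
    hF.toLp F ∈ modelSpace w := by
  constructor
  · apply mem_hardy_iff.mpr
    intro n hn
    rw [fc_congr hF.coeFn_toLp]
    exact h1 n hn
  · apply mem_mulHardy_orth hm hb
    intro n hn
    have he : (fun t => conj (w t) * (hF.toLp F) t) =ᵐ[μT] fun t => conj (w t) * F t := by
      filter_upwards [hF.coeFn_toLp] with t ht
      rw [ht]
    rw [fc_congr he]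
    exact h2 n hn

lemma mulHardy_le_hardy {w : 𝕋 → ℂ} (hm : AEStronglyMeasurable w μT)
    (hb : ∀ᵐ t ∂μT, ‖w t‖ ≤ 1) (hwa : ∀ k : ℤ, k < 0 → fourierCoeff w k = 0) :
    mulHardy w ≤ hardy := by
  rintro g ⟨h₁, hh₁, e⟩
  apply mem_hardy_iff.mpr
  intro n hn
  rw [fc_congr e]
  exact fc_mul_an hm hb (Lp.memLp h₁) hwa (fun k hk => mem_hardy_iff.mp hh₁ k hk) n hn

set_option maxHeartbeats 1000000 in
set_option synthInstance.maxHeartbeats 400000 in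
lemma analytic_div_of_orth {w : 𝕋 → ℂ} (hm : AEStronglyMeasurable w μT)
    (hw1 : ∀ᵐ t ∂μT, ‖w t‖ = 1) (hwa : ∀ k : ℤ, k < 0 → fourierCoeff w k = 0)
    {x : L2T} (hxh : x ∈ hardy)
    (horth : ∀ f : L2T, f ∈ modelSpace w → ⟪x, f⟫_ℂ = 0) :
    ∀ n : ℤ, n < 0 → fourierCoeff (fun t => conj (w t) * x t) n = 0 := by
  have hb : ∀ᵐ t ∂μT, ‖w t‖ ≤ 1 := hw1.mono fun t ht => ht.le
  set N := (mulHardy w)ᗮ with hN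
  set y := ((N.orthogonalProjectionOnto x : N) : L2T) with hy
  have hyN : y ∈ N := SetLike.coe_mem _
  have hz0 : x - y ∈ Nᗮ := Submodule.sub_starProjection_mem_orthogonal (K := N) x
  have hz : x - y ∈ (mulHardy w).topologicalClosure := by
    rw [hN, Submodule.orthogonal_orthogonal_eq_closure] at hz0
    exact hz0
  have hz0' : x - y ∈ Nᗮ := Submodule.sub_starProjection_mem_orthogonal (K := N) x
  have hclos_hardy : (mulHardy w).topologicalClosure ≤ hardy :=
    Submodule.topologicalClosure_minimal _ (mulHardy_le_hardy hm hb hwa)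
      (Submodule.isClosed_topologicalClosure _)
  -- membership in the "kernels" of the coefficient functionals
  have hker : ∀ n : ℤ, n < 0 → (mulHardy w).topologicalClosure ≤
      LinearMap.ker (innerSL ℂ ((memLp_mul_fourier hm hb n).toLp _)).toLinearMap := by
    intro n hn
    apply Submodule.topologicalClosure_minimal
    · rintro g ⟨h₁, hh₁, e⟩
      simp only [SetLike.mem_coe, LinearMap.mem_ker, ContinuousLinearMap.coe_coe, innerSL_apply_apply]
      rw [inner_toLp_left]
      have hcoef : ∫ t, conj (w t * fourier n t) * g t ∂μT
          = fourierCoeff (fun t => conj (w t) * g t) n := by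
        unfold fourierCoeff
        apply integral_congr_ae
        apply Filter.EventuallyEq.of_eq
        funext t
        simp only [smul_eq_mul, map_mul, ← fourier_neg]
        ring
      rw [hcoef]
      have he2 : (fun t => conj (w t) * g t) =ᵐ[μT] ⇑h₁ := by
        filter_upwards [e, hw1] with t ht hwt
        rw [ht, ← mul_assoc, ← Complex.normSq_eq_conj_mul_self,
          Complex.normSq_eq_norm_sq, hwt]
        norm_num
      rw [fc_congr he2]
      exact mem_hardy_iff.mp hh₁ n hn
    · exact ContinuousLinearMap.isClosed_ker _
  -- show y = 0
  have hymem : y ∈ modelSpace w := by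
    refine ⟨?_, hyN⟩
    have hxy : x - y ∈ hardy := hclos_hardy hz
    rw [show y = x - (x - y) from (sub_sub_cancel x y).symm]
    exact Submodule.sub_mem _ hxh hxy
  have hinner0 := horth y hymem
  have hzy : ⟪x - y, y⟫_ℂ = 0 := by
    rw [← inner_conj_symm]
    rw [(Submodule.mem_orthogonal _ _).mp hz0' y hyN]
    simp
  have hyy : ⟪y, y⟫_ℂ = 0 := by
    have hsplit : ⟪x, y⟫_ℂ = ⟪x - y, y⟫_ℂ + ⟪y, y⟫_ℂ := by
      rw [← inner_add_left, sub_add_cancel]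
    rw [hinner0, hzy, zero_add] at hsplit
    exact hsplit.symm
  have hy0 : y = 0 := inner_self_eq_zero.mp hyy
  intro n hn
  have hxk := hker n hn hz
  rw [hy0, sub_zero] at hxk
  rw [LinearMap.mem_ker, ContinuousLinearMap.coe_coe, innerSL_apply_apply, inner_toLp_left] at hxk
  rw [← hxk]
  unfold fourierCoeff
  apply integral_congr_ae
  apply Filter.EventuallyEq.of_eq
  funext t
  simp only [smul_eq_mul, map_mul, ← fourier_neg]
  ring

lemma conj_mul_self_one {z : ℂ} (h : ‖z‖ = 1) : conj z * z = 1 := by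
  rw [mul_comm, Complex.mul_conj, Complex.normSq_eq_norm_sq, h]
  norm_num

lemma conj_eq_inv {z : ℂ} (h : ‖z‖ = 1) : conj z = z⁻¹ :=
  eq_inv_of_mul_eq_one_left (conj_mul_self_one h)

lemma ne_zero_of_norm_one {z : ℂ} (h : ‖z‖ = 1) : z ≠ 0 := by
  intro h0
  rw [h0] at h
  simp at h

/-- A function whose nonzero Fourier coefficients vanish is a.e. constant. -/
lemma ae_const_of_coeff {f : 𝕋 → ℂ} (hf : MemLp f 2 μT)
    (h : ∀ m : ℤ, m ≠ 0 → fourierCoeff f m = 0) :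
    f =ᵐ[μT] fun _ => fourierCoeff f 0 := by
  have h1 : hf.toLp f = fourierCoeff f 0 • (fourierLp 2 0 : L2T) := by
    apply fourierBasis.repr.injective
    rw [_root_.map_smul]
    ext m
    rw [lp.coeFn_smul, Pi.smul_apply]
    rw [fourierBasis_repr, fourierBasis_repr, fc_congr hf.coeFn_toLp,
      fc_congr (coeFn_fourierLp 2 0), fc_fourier]
    by_cases hm : m = 0
    · subst hm; simp
    · rw [h m hm]; simp [hm]
  have h2 : f =ᵐ[μT] ⇑(hf.toLp f) := hf.coeFn_toLp.symm
  rw [h1] at h2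
  have h3 : ⇑(fourierCoeff f 0 • (fourierLp 2 0 : L2T))
      =ᵐ[μT] fun _ => fourierCoeff f 0 := by
    filter_upwards [Lp.coeFn_smul (fourierCoeff f 0) (fourierLp 2 0 : L2T),
      coeFn_fourierLp 2 (0 : ℤ)] with t ht1 ht2
    rw [ht1, Pi.smul_apply, ht2, fourier_zero, smul_eq_mul, mul_one]
  exact h2.trans h3

/-- Parseval bound: a unimodular function with a nonzero coefficient away from `0`
has `‖f̂(0)‖ < 1`. -/
lemma coeff_zero_lt_one {f : 𝕋 → ℂ} (hm : AEStronglyMeasurable f μT)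
    (h1 : ∀ᵐ t ∂μT, ‖f t‖ = 1) {m : ℤ} (hm0 : m ≠ 0) (hc : fourierCoeff f m ≠ 0) :
    ‖fourierCoeff f 0‖ < 1 := by
  have hLp : MemLp f 2 μT := memLp_of_bdd hm 1 (h1.mono fun t ht => ht.le)
  set X := hLp.toLp f with hXdef
  have hcoe : ∀ k : ℤ, fourierCoeff (⇑X) k = fourierCoeff f k :=
    fun k => fc_congr hLp.coeFn_toLp k
  have hpars := tsum_sq_fourierCoeff X
  have hint : (∫ t, ‖X t‖ ^ 2 ∂μT) = 1 := by
    rw [integral_congr_ae (g := fun _ => (1 : ℝ))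
      (by filter_upwards [hLp.coeFn_toLp, h1] with t ht h1t; rw [ht, h1t]; norm_num)]
    simp
  rw [hint] at hpars
  have hsum0 := fourierBasis.hasSum_inner_mul_inner X X
  have hterm : ∀ k : ℤ, Complex.reCLM (⟪X, fourierBasis (T := 2 * π) k⟫_ℂ
      * ⟪fourierBasis (T := 2 * π) k, X⟫_ℂ) = ‖fourierCoeff (⇑X) k‖ ^ 2 := by
    intro k
    rw [← inner_conj_symm X, ← fourierBasis.repr_apply_apply, fourierBasis_repr]
    rw [mul_comm, Complex.mul_conj]
    simp only [Complex.reCLM_apply, Complex.ofReal_re]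
    rw [Complex.normSq_eq_norm_sq]
  have hsum1 : Summable fun k : ℤ => ‖fourierCoeff (⇑X) k‖ ^ 2 := by
    have := (hsum0.mapL Complex.reCLM).summable
    exact this.congr hterm
  have hle := Summable.sum_le_tsum ({0, m} : Finset ℤ)
    (fun i _ => by positivity) hsum1
  rw [hpars, Finset.sum_pair (by omega : (0 : ℤ) ≠ m)] at hle
  have hpos : 0 < ‖fourierCoeff (⇑X) m‖ ^ 2 := by
    rw [hcoe]
    exact pow_pos (norm_pos_iff.mpr hc) 2
  simp only [hcoe] at hle hpos
  nlinarith [norm_nonneg (fourierCoeff f 0)]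

end Helpers

open scoped ComplexConjugate InnerProductSpace

/-- if `gcd(u,v) = 1`, `v` divides `θ` and the truncated Toeplitz operator
`A_{conj(u)v}` on `K_θ` is zero, then `θ = c·v` for a unimodular constant `c`, or `v` is a
unimodular constant. -/
theorem stmt_18 (θ u v : AddCircle (2 * π) → ℂ)
    (hθ : IsInner θ) (hu : IsInner u) (hv : IsInner v)
    (hθ_nc : ¬ ∃ c : ℂ, ∀ᵐ t ∂μT, θ t = c)
    (hcop : InnerCoprime u v) (hdvd : InnerDivides v θ)
    (A : modelSpace θ →L[ℂ] modelSpace θ)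
    (hA : IsTTO θ (fun t => (starRingEnd ℂ) (u t) * v t) A)
    (hA0 : A = 0) :
    (∃ c : ℂ, ‖c‖ = 1 ∧ ∀ᵐ t ∂μT, θ t = c * v t) ∨
      (∃ c : ℂ, ‖c‖ = 1 ∧ ∀ᵐ t ∂μT, v t = c) := by
  classical
  obtain ⟨θ₁, hθ₁, hθfac⟩ := hdvd
  have hub : ∀ᵐ t ∂μT, ‖u t‖ ≤ 1 := hu.unimod.mono fun t ht => ht.le
  have hvb : ∀ᵐ t ∂μT, ‖v t‖ ≤ 1 := hv.unimod.mono fun t ht => ht.le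
  have hθb : ∀ᵐ t ∂μT, ‖θ t‖ ≤ 1 := hθ.unimod.mono fun t ht => ht.le
  have hθ₁b : ∀ᵐ t ∂μT, ‖θ₁ t‖ ≤ 1 := hθ₁.unimod.mono fun t ht => ht.le
  have hθ₁Lp : MemLp θ₁ 2 μT := memLp_of_bdd hθ₁.meas 1 hθ₁b
  set c : ℂ := fourierCoeff θ₁ 0 with hcdef
  by_cases hcase : ∀ m : ℤ, m ≠ 0 → fourierCoeff θ₁ m = 0
  · -- θ₁ is constant, hence θ = c·v
    left
    have hconst : θ₁ =ᵐ[μT] fun _ => c := ae_const_of_coeff hθ₁Lp hcase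
    haveI : (ae μT).NeBot := MeasureTheory.ae_neBot.mpr (IsProbabilityMeasure.ne_zero μT)
    obtain ⟨t0, ht1, ht2⟩ := (hθ₁.unimod.and hconst).exists
    refine ⟨c, ?_, ?_⟩
    · rw [show c = θ₁ t0 from ht2.symm]
      exact ht1
    · filter_upwards [hθfac, hconst] with t h1 h2
      rw [h1, h2]; ring
  · -- θ₁ is nonconstant: we show v is constant
    right
    push_neg at hcase
    obtain ⟨m, hm0, hcm⟩ := hcase
    have hclt : ‖c‖ < 1 := coeff_zero_lt_one hθ₁.meas hθ₁.unimod hm0 hcm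
    -- measurability of conjugates
    have hum' : AEStronglyMeasurable (fun t => conj (u t)) μT :=
      Complex.continuous_conj.comp_aestronglyMeasurable hu.meas
    have hvm' : AEStronglyMeasurable (fun t => conj (v t)) μT :=
      Complex.continuous_conj.comp_aestronglyMeasurable hv.meas
    have hθ₁m' : AEStronglyMeasurable (fun t => conj (θ₁ t)) μT :=
      Complex.continuous_conj.comp_aestronglyMeasurable hθ₁.meas
    have hzm : AEStronglyMeasurable (fun t => conj (fourier 1 t)) μT :=
      Complex.continuous_conj.comp_aestronglyMeasurable
        (fourier 1).continuous.aestronglyMeasurable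
    -- integrability
    have hintv : Integrable v μT := integrable_of_memLp (memLp_of_bdd hv.meas 1 hvb)
    have hintθ : Integrable θ μT := integrable_of_memLp (memLp_of_bdd hθ.meas 1 hθb)
    have hintu : Integrable u μT := integrable_of_memLp (memLp_of_bdd hu.meas 1 hub)
    have hintθ₁' : Integrable (fun t => conj (θ₁ t)) μT :=
      integrable_of_memLp (memLp_of_bdd hθ₁m' 1
        (by filter_upwards [hθ₁b] with t ht; rwa [RCLike.norm_conj]))
    have huθ₁m : MemLp (fun t => u t * θ₁ t) 2 μT := by
      apply memLp_of_bdd (hu.meas.mul hθ₁.meas) 1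
      filter_upwards [hub, hθ₁b] with t h1 h2
      simp only [Pi.mul_apply]
      rw [norm_mul]
      exact mul_le_one₀ h1 (norm_nonneg _) h2
    have hintuθ₁ : Integrable (fun t => u t * θ₁ t) μT := integrable_of_memLp huθ₁m
    -- coefficient facts
    have hcoeffuθ₁ : ∀ k : ℤ, k < 0 → fourierCoeff (fun t => u t * θ₁ t) k = 0 :=
      fc_mul_an hu.meas hub hθ₁Lp hu.analytic hθ₁.analytic
    have huθ₁0 : fourierCoeff (fun t => u t * θ₁ t) 0 = fourierCoeff u 0 * c :=
      fc_mul_zero hu.meas hub hθ₁Lp hu.analytic hθ₁.analytic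
    have hθ0 : fourierCoeff θ 0 = fourierCoeff v 0 * c := by
      rw [fc_congr hθfac, fc_mul_zero hv.meas hvb hθ₁Lp hv.analytic hθ₁.analytic]
    -- the vanishing condition coming from A = 0
    have hcond : ∀ f : L2T, f ∈ modelSpace θ → ∀ L : L2T, L ∈ modelSpace θ →
        ∫ t, conj (L t) * (conj (u t) * v t * f t) ∂μT = 0 := by
      intro f hf L hL
      have hFm : MemLp (fun t => conj (u t) * v t * f t) 2 μT := by
        refine (Lp.memLp f).of_le ((hum'.mul hv.meas).mul (Lp.aestronglyMeasurable f)) ?_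
        filter_upwards [hu.unimod, hv.unimod] with t h2 h3
        rw [norm_mul, norm_mul, RCLike.norm_conj, h2, h3]
        norm_num
      have hA' := hA ⟨f, hf⟩ (hFm.toLp _) hFm.coeFn_toLp
      rw [hA0] at hA'
      have hg0 : (modelSpace θ).orthogonalProjectionOnto (hFm.toLp _) = 0 := by
        have h0 : Pmod θ (hFm.toLp _) = 0 := by rw [← hA']; simp
        exact h0
      have hperp := Submodule.orthogonalProjectionOnto_eq_zero_iff.mp hg0
      have h0 := (Submodule.mem_orthogonal _ _).mp hperp L hL
      rwa [inner_toLp_right L hFm] at h0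
    -- K_v ⊆ K_θ
    have hKv : modelSpace v ≤ modelSpace θ := by
      rintro f ⟨hfh, hfo⟩
      refine ⟨hfh, mem_mulHardy_orth hθ.meas hθb ?_⟩
      intro n hn
      have hq := coeff_conj_mul_of_orth hv.meas hvb hfo
      have he : (fun t => conj (θ t) * f t) =ᵐ[μT]
          fun t => conj (θ₁ t) * (conj (v t) * f t) := by
        filter_upwards [hθfac] with t ht
        rw [ht, map_mul]
        ring
      rw [fc_congr he]
      refine fc_mul_coan hθ₁m'
        (by filter_upwards [hθ₁b] with t ht; rwa [RCLike.norm_conj])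
        (memLp_conj_mul_Lp hv.meas hvb f) ?_ hq n hn
      intro k hk
      rw [fc_conj, hθ₁.analytic (-k) (by omega), map_zero]
    -- test element l₂ = v - c̄θ ∈ K_θ
    have hl2m : MemLp (fun t => v t - conj c * θ t) 2 μT := by
      apply memLp_of_bdd (hv.meas.sub (hθ.meas.const_mul _)) (1 + ‖c‖)
      filter_upwards [hvb, hθb] with t h1 h2
      calc ‖v t - conj c * θ t‖ ≤ ‖v t‖ + ‖conj c * θ t‖ := norm_sub_le _ _
        _ ≤ 1 + ‖c‖ := by
            refine add_le_add h1 ?_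
            rw [norm_mul, RCLike.norm_conj]
            exact mul_le_of_le_one_right (norm_nonneg _) h2
    have hl2mem : hl2m.toLp _ ∈ modelSpace θ := by
      apply mem_model hθ.meas hθb
      · intro n hn
        rw [fc_sub hintv (hintθ.const_mul _), fc_const_mul, hv.analytic n hn,
          hθ.analytic n hn, mul_zero, sub_zero]
      · intro n hn
        have he : (fun t => conj (θ t) * (v t - conj c * θ t)) =ᵐ[μT]
            fun t => conj (θ₁ t) - conj c := by
          filter_upwards [hθfac, hv.unimod, hθ₁.unimod] with t h1 h2 h3
          have hv0 := ne_zero_of_norm_one h2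
          have hθ₁0 := ne_zero_of_norm_one h3
          rw [h1, map_mul, conj_eq_inv h2, conj_eq_inv h3]
          field_simp
        rw [fc_congr he, fc_sub hintθ₁' (integrable_const _), fc_conj, fc_const]
        rcases eq_or_lt_of_le hn with h | h
        · rw [← h]
          simp [← hcdef]
        · rw [hθ₁.analytic (-n) (by omega), if_neg (by omega), map_zero, sub_zero]
    -- test element l₁ = z̄(θ - c·v) ∈ K_θ
    have hl1m : MemLp (fun t => conj (fourier 1 t) * (θ t - c * v t)) 2 μT := by
      apply memLp_of_bdd (hzm.mul (hθ.meas.sub (hv.meas.const_mul _))) (1 + ‖c‖)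
      filter_upwards [hvb, hθb] with t h1 h2
      simp only [Pi.mul_apply, Pi.sub_apply]
      rw [norm_mul, RCLike.norm_conj, norm_fourier', one_mul]
      calc ‖θ t - c * v t‖ ≤ ‖θ t‖ + ‖c * v t‖ := norm_sub_le _ _
        _ ≤ 1 + ‖c‖ := by
            refine add_le_add h2 ?_
            rw [norm_mul]
            exact mul_le_of_le_one_right (norm_nonneg _) h1
    have hl1mem : hl1m.toLp _ ∈ modelSpace θ := by
      apply mem_model hθ.meas hθb
      · intro n hn
        rw [fc_zbar_mul, fc_sub hintθ (hintv.const_mul _), fc_const_mul]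
        by_cases h : n + 1 = 0
        · rw [h, hθ0]
          ring
        · rw [hθ.analytic (n + 1) (by omega), hv.analytic (n + 1) (by omega)]
          ring
      · intro n hn
        have he : (fun t => conj (θ t) * (conj (fourier 1 t) * (θ t - c * v t)))
            =ᵐ[μT] fun t => conj (fourier 1 t) * (1 - c * conj (θ₁ t)) := by
          filter_upwards [hθfac, hv.unimod, hθ₁.unimod] with t h1 h2 h3
          have hv0 := ne_zero_of_norm_one h2
          have hθ₁0 := ne_zero_of_norm_one h3
          rw [h1, map_mul, conj_eq_inv h2, conj_eq_inv h3]
          field_simp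
        have hint1c : Integrable (fun _ : AddCircle (2 * π) => (1 : ℂ)) μT :=
          integrable_const _
        rw [fc_congr he, fc_zbar_mul, fc_sub hint1c (hintθ₁'.const_mul _),
          fc_const, fc_const_mul, fc_conj, hθ₁.analytic (-(n + 1)) (by omega),
          if_neg (by omega), map_zero, mul_zero, sub_zero]
    -- the functions G_B and G_A
    have hGBm : MemLp (fun t => u t - conj c * (u t * θ₁ t)) 2 μT := by
      apply memLp_of_bdd (hu.meas.sub ((hu.meas.mul hθ₁.meas).const_mul _)) (1 + ‖c‖)
      filter_upwards [hub, hθ₁b] with t h1 h2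
      calc ‖u t - conj c * (u t * θ₁ t)‖ ≤ ‖u t‖ + ‖conj c * (u t * θ₁ t)‖ :=
            norm_sub_le _ _
        _ ≤ 1 + ‖c‖ := by
            refine add_le_add h1 ?_
            rw [norm_mul, RCLike.norm_conj, norm_mul]
            exact mul_le_of_le_one_right (norm_nonneg _)
              (mul_le_one₀ h1 (norm_nonneg _) h2)
    have hGAm : MemLp (fun t => conj (fourier 1 t) * (u t * θ₁ t)
        - c * (conj (fourier 1 t) * u t)) 2 μT := by
      apply memLp_of_bdd ((hzm.mul (hu.meas.mul hθ₁.meas)).sub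
        ((hzm.mul hu.meas).const_mul _)) (1 + ‖c‖)
      filter_upwards [hub, hθ₁b] with t h1 h2
      calc ‖conj (fourier 1 t) * (u t * θ₁ t) - c * (conj (fourier 1 t) * u t)‖
          ≤ ‖conj (fourier 1 t) * (u t * θ₁ t)‖ + ‖c * (conj (fourier 1 t) * u t)‖ :=
            norm_sub_le _ _
        _ ≤ 1 + ‖c‖ := by
            refine add_le_add ?_ ?_
            · rw [norm_mul, RCLike.norm_conj, norm_fourier', one_mul, norm_mul]
              exact mul_le_one₀ h1 (norm_nonneg _) h2
            · rw [norm_mul, norm_mul, RCLike.norm_conj, norm_fourier', one_mul]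
              exact mul_le_of_le_one_right (norm_nonneg _) h1
    have hintGBz : Integrable (fun t => conj (fourier 1 t) * (u t * θ₁ t)) μT := by
      refine hintuθ₁.bdd_mul (c := 1) hzm (Filter.Eventually.of_forall fun t => ?_)
      rw [RCLike.norm_conj, norm_fourier']
    have hintGAz : Integrable (fun t => conj (fourier 1 t) * u t) μT := by
      refine hintu.bdd_mul (c := 1) hzm (Filter.Eventually.of_forall fun t => ?_)
      rw [RCLike.norm_conj, norm_fourier']
    -- their coefficients vanish on negative indices
    have hGBa : ∀ n : ℤ, n < 0 →
        fourierCoeff (fun t => u t - conj c * (u t * θ₁ t)) n = 0 := by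
      intro n hn
      rw [fc_sub hintu (hintuθ₁.const_mul _), fc_const_mul, hu.analytic n hn,
        hcoeffuθ₁ n hn, mul_zero, sub_zero]
    have hGAa : ∀ n : ℤ, n < 0 →
        fourierCoeff (fun t => conj (fourier 1 t) * (u t * θ₁ t)
          - c * (conj (fourier 1 t) * u t)) n = 0 := by
      intro n hn
      rw [fc_sub hintGBz (hintGAz.const_mul _), fc_const_mul, fc_zbar_mul, fc_zbar_mul]
      by_cases h : n + 1 = 0
      · rw [h, huθ₁0]
        ring
      · rw [hcoeffuθ₁ (n + 1) (by omega), hu.analytic (n + 1) (by omega)]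
        ring
    -- orthogonality of G_B, G_A to K_v (from the zero-operator condition)
    have hB : ∀ f : L2T, f ∈ modelSpace v → ⟪hGBm.toLp _, f⟫_ℂ = 0 := by
      intro f hf
      rw [inner_toLp_left]
      have h0 := hcond f (hKv hf) (hl2m.toLp _) hl2mem
      rw [← h0]
      apply integral_congr_ae
      filter_upwards [hl2m.coeFn_toLp, hθfac, hv.unimod, hθ₁.unimod] with t h1 h2 h3 h4
      rw [h1, h2]
      have hv0 := ne_zero_of_norm_one h3
      have hθ₁0 := ne_zero_of_norm_one h4
      simp only [map_sub, map_mul, Complex.conj_conj]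
      rw [conj_eq_inv h3, conj_eq_inv h4]
      field_simp
    have hA2 : ∀ f : L2T, f ∈ modelSpace v → ⟪hGAm.toLp _, f⟫_ℂ = 0 := by
      intro f hf
      rw [inner_toLp_left]
      have h0 := hcond f (hKv hf) (hl1m.toLp _) hl1mem
      rw [← h0]
      apply integral_congr_ae
      filter_upwards [hl1m.coeFn_toLp, hθfac, hv.unimod, hθ₁.unimod] with t h1 h2 h3 h4
      rw [h1, h2]
      have hv0 := ne_zero_of_norm_one h3
      have hθ₁0 := ne_zero_of_norm_one h4
      simp only [map_sub, map_mul, Complex.conj_conj]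
      rw [conj_eq_inv h3, conj_eq_inv h4]
      field_simp
    -- G_B, G_A belong to H²
    have hGBh : hGBm.toLp _ ∈ hardy := by
      apply mem_hardy_iff.mpr
      intro n hn
      rw [fc_congr hGBm.coeFn_toLp]
      exact hGBa n hn
    have hGAh : hGAm.toLp _ ∈ hardy := by
      apply mem_hardy_iff.mpr
      intro n hn
      rw [fc_congr hGAm.coeFn_toLp]
      exact hGAa n hn
    -- divide by v
    have hvGB := analytic_div_of_orth hv.meas hv.unimod hv.analytic hGBh hB
    have hvGA := analytic_div_of_orth hv.meas hv.unimod hv.analytic hGAh hA2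
    have hvGB' : ∀ n : ℤ, n < 0 →
        fourierCoeff (fun t => conj (v t) * (u t - conj c * (u t * θ₁ t))) n = 0 := by
      intro n hn
      have he : (fun t => conj (v t) * (u t - conj c * (u t * θ₁ t)))
          =ᵐ[μT] fun t => conj (v t) * (hGBm.toLp _ : L2T) t := by
        filter_upwards [hGBm.coeFn_toLp] with t ht
        rw [ht]
      rw [fc_congr he]
      exact hvGB n hn
    have hvGA' : ∀ n : ℤ, n < 0 →
        fourierCoeff (fun t => conj (v t) * (conj (fourier 1 t) * (u t * θ₁ t)
          - c * (conj (fourier 1 t) * u t))) n = 0 := by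
      intro n hn
      have he : (fun t => conj (v t) * (conj (fourier 1 t) * (u t * θ₁ t)
          - c * (conj (fourier 1 t) * u t)))
          =ᵐ[μT] fun t => conj (v t) * (hGAm.toLp _ : L2T) t := by
        filter_upwards [hGAm.coeFn_toLp] with t ht
        rw [ht]
      rw [fc_congr he]
      exact hvGA n hn
    -- the key combination: conj v * u is analytic
    have hkey : ∀ n : ℤ, n < 0 → fourierCoeff (fun t => conj (v t) * u t) n = 0 := by
      intro n hn
      have hz1 : ∀ t : AddCircle (2 * π), fourier 1 t * conj (fourier 1 t) = 1 := by
        intro t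
        rw [Complex.mul_conj, Complex.normSq_eq_norm_sq, norm_fourier']
        norm_num
      have hident : (fun t => (1 - c * conj c) * (conj (v t) * u t)) =
          fun t => conj (v t) * (u t - conj c * (u t * θ₁ t))
            + conj c * (fourier 1 t * (conj (v t) * (conj (fourier 1 t) * (u t * θ₁ t)
              - c * (conj (fourier 1 t) * u t)))) := by
        funext t
        have hzz := hz1 t
        linear_combination (conj c * c * (conj (v t) * u t)
          - conj c * (conj (v t) * u t * θ₁ t)) * hzz
      have hvGBm : MemLp (fun t => conj (v t) * (u t - conj c * (u t * θ₁ t))) 2 μT := by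
        refine hGBm.of_le (hvm'.mul hGBm.aestronglyMeasurable) ?_
        filter_upwards [hvb] with t ht
        rw [norm_mul, RCLike.norm_conj]
        exact mul_le_of_le_one_left (norm_nonneg _) ht
      have hvGAm : MemLp (fun t => conj (v t) * (conj (fourier 1 t) * (u t * θ₁ t)
          - c * (conj (fourier 1 t) * u t))) 2 μT := by
        refine hGAm.of_le (hvm'.mul hGAm.aestronglyMeasurable) ?_
        filter_upwards [hvb] with t ht
        rw [norm_mul, RCLike.norm_conj]
        exact mul_le_of_le_one_left (norm_nonneg _) ht
      have hint1 : Integrable (fun t => conj (v t)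
          * (u t - conj c * (u t * θ₁ t))) μT := integrable_of_memLp hvGBm
      have hint2 : Integrable (fun t => conj c * (fourier 1 t
          * (conj (v t) * (conj (fourier 1 t) * (u t * θ₁ t)
            - c * (conj (fourier 1 t) * u t))))) μT :=
        ((integrable_of_memLp hvGAm).bdd_mul
          (c := 1) (fourier 1).continuous.aestronglyMeasurable
          (Filter.Eventually.of_forall fun t => le_of_eq (norm_fourier' 1 t))).const_mul _
      have e2 : fourierCoeff (fun t => (1 - c * conj c) * (conj (v t) * u t)) n = 0 := by
        rw [hident, fc_add hint1 hint2, fc_const_mul, fc_shift]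
        rw [hvGB' n hn, hvGA' (n - 1) (by omega), mul_zero, add_zero]
      rw [fc_const_mul] at e2
      have hne : (1 : ℂ) - c * conj c ≠ 0 := by
        rw [Complex.mul_conj, sub_ne_zero]
        intro hq
        have hre := congrArg Complex.re hq
        simp only [Complex.one_re, Complex.ofReal_re] at hre
        have h2 : Complex.normSq c = ‖c‖ ^ 2 := by
          rw [Complex.normSq_eq_norm_sq]
        nlinarith [norm_nonneg c]
      exact (mul_eq_zero.mp e2).resolve_left hne
    -- conclude by coprimality
    have hWm : AEStronglyMeasurable (fun t => conj (v t) * u t) μT := hvm'.mul hu.meas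
    have hWu : ∀ᵐ t ∂μT, ‖conj (v t) * u t‖ = 1 := by
      filter_upwards [hv.unimod, hu.unimod] with t h1 h2
      rw [norm_mul, RCLike.norm_conj, h1, h2, mul_one]
    have hW : IsInner (fun t => conj (v t) * u t) := ⟨hWm, hWu, hkey⟩
    have hdivu : InnerDivides v u := by
      refine ⟨_, hW, ?_⟩
      filter_upwards [hv.unimod] with t h1
      rw [← mul_assoc, mul_comm (v t), conj_mul_self_one h1, one_mul]
    have hone : IsInner (fun _ : AddCircle (2 * π) => (1 : ℂ)) :=
      ⟨aestronglyMeasurable_const, Filter.Eventually.of_forall (by simp),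
        fun n hn => by rw [fc_const, if_neg (by omega)]⟩
    have hdivv : InnerDivides v v :=
      ⟨_, hone, Filter.Eventually.of_forall fun t => by simp⟩
    exact hcop v hv hdivu hdivv
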